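/- Let μ be a Borel probability measure on T^s, k an odd natural, and for each atom P of the cube partition P^{(k)}_j let P̃ denote the concentric cube of side 6π/k^{j-1}. Then for every δ > 0 and j ≥ 1, μ({x : μ(P^{(k)}_j(x)) ≥ δ μ(P̃^{(k)}_j(x))}) ≥ 1 − δ 3^s k^s. -/

import Mathlib

/- STATEMENT 1: Mañé's partition lemma on the torus (second inequality).
`Torus s` is the `s`-dimensional torus `(ℝ/2πℤ)^s`.  For an odd `k`, `cubeAtom s k j x`
is the atom of the partition `P^{(k)}_j` of the torus into cubes of side `2π/k^j`
containing `x`, and `hatCube s k j x` is the concentric cube of side `2π/k^{j-1}`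
(the union of the `k^s` atoms whose indices differ from that of `x` by at most
`(k-1)/2` in each coordinate, modulo `k^j`). -/

open MeasureTheory Set

noncomputable section

abbrev Torus (s : ℕ) := Fin s → AddCircle (2 * Real.pi)

/-- The canonical representative in `[0, 2π)` of a point of the circle `ℝ/2πℤ`. -/
def circleRep (x : AddCircle (2 * Real.pi)) : ℝ :=
  haveI : Fact ((0:ℝ) < 2 * Real.pi) := ⟨by positivity⟩
  ((AddCircle.equivIco (2 * Real.pi) 0 x : Set.Ico (0:ℝ) (0 + 2 * Real.pi)) : ℝ)

/-- The index (in `{0, …, k^j - 1}`, as an integer) of the arc of length `2π/k^j`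
containing the point `x` of the circle. -/
def cubeIdx (k j : ℕ) (x : AddCircle (2 * Real.pi)) : ℤ :=
  ⌊circleRep x * (k : ℝ) ^ j / (2 * Real.pi)⌋

/-- The atom of the partition `P^{(k)}_j` of the torus into cubes of side `2π/k^j`
containing `x`. -/
def cubeAtom (s k j : ℕ) (x : Torus s) : Set (Torus s) :=
  {y | ∀ i, cubeIdx k j (y i) = cubeIdx k j (x i)}

/-- The cube `P̂` concentric with the atom of `x`, of side `2π/k^{j-1}` (for odd `k`):
the union of the atoms whose index differs by at most `(k-1)/2` in each coordinate,
modulo `k^j`. -/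
def hatCube (s k j : ℕ) (x : Torus s) : Set (Torus s) :=
  {y | ∀ i, ∃ d : ℤ, |d| ≤ ((k : ℤ) - 1) / 2 ∧
    ((cubeIdx k j (y i) : ZMod (k ^ j)) = (cubeIdx k j (x i) : ZMod (k ^ j)) + (d : ZMod (k ^ j)))}

/-- The cube `P̃` concentric with the atom of `x`, of side `6π/k^{j-1}` (for odd `k`):
the union of the atoms whose index differs by at most `(3k-1)/2` in each coordinate,
modulo `k^j`. -/
def tildeCube (s k j : ℕ) (x : Torus s) : Set (Torus s) :=
  {y | ∀ i, ∃ d : ℤ, |d| ≤ (3 * (k : ℤ) - 1) / 2 ∧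
    ((cubeIdx k j (y i) : ZMod (k ^ j)) = (cubeIdx k j (x i) : ZMod (k ^ j)) + (d : ZMod (k ^ j)))}

/-!
The points `x` with `μ (P(x)) < δ μ (P̃(x))` form a union of bad atoms `P`, so their measure is
at most `δ ∑_P μ (P̃)`. Each `P̃` is the union of the atoms whose index lies within `(3k-1)/2` of
that of `P` in every coordinate modulo `k^j`, so every atom lies in at most `(3k)^s` of the
cubes `P̃`, and `∑_P μ (P̃) ≤ (3k)^s`.
-/

open scoped ENNReal

section Fibers

variable {α ι : Type*} [MeasurableSpace α] [Fintype ι] (μ : Measure α) {f : α → ι}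

theorem sum_measure_preimage_le_mul_measure_univ (hf : ∀ p, MeasurableSet (f ⁻¹' {p}))
    (N : ι → Set ι) {M : ℕ} (hN : ∀ q, {p | q ∈ N p}.ncard ≤ M) :
    ∑ p, μ (f ⁻¹' N p) ≤ M * μ univ := by
  classical
  have hfiber (t : Set ι) : μ (f ⁻¹' t) = ∑ q, if q ∈ t then μ (f ⁻¹' {q}) else 0 := by
    rw [← Finset.sum_filter, sum_measure_preimage_singleton _ fun q _ => hf q]
    congr; ext; simp
  calc ∑ p, μ (f ⁻¹' N p) = ∑ q, ∑ p, if q ∈ N p then μ (f ⁻¹' {q}) else 0 := by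
        rw [Finset.sum_congr rfl fun p _ => hfiber (N p)]; exact Finset.sum_comm
    _ = ∑ q, ({p | q ∈ N p}.ncard : ℝ≥0∞) * μ (f ⁻¹' {q}) := by
        refine Finset.sum_congr rfl fun q _ => ?_
        rw [← Finset.sum_filter, Finset.sum_const, nsmul_eq_mul, ← Set.ncard_coe_finset]
        simp
    _ ≤ ∑ q, (M : ℝ≥0∞) * μ (f ⁻¹' {q}) := by gcongr; exact_mod_cast hN _
    _ = M * μ univ := by
        rw [← Finset.mul_sum, sum_measure_preimage_singleton _ fun q _ => hf q, Finset.coe_univ,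
          preimage_univ]

theorem measure_setOf_measure_fiber_lt_le (hf : ∀ p, MeasurableSet (f ⁻¹' {p}))
    (N : ι → Set ι) {M : ℕ} (hN : ∀ q, {p | q ∈ N p}.ncard ≤ M) (δ : ℝ≥0∞) :
    μ {x | μ (f ⁻¹' {f x}) < δ * μ (f ⁻¹' N (f x))} ≤ δ * M * μ univ := by
  classical
  set bad : Finset ι := {p | μ (f ⁻¹' {p}) < δ * μ (f ⁻¹' N p)}
  have hbad : {x | μ (f ⁻¹' {f x}) < δ * μ (f ⁻¹' N (f x))} = f ⁻¹' bad := by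
    ext; simp [bad]
  calc μ {x | μ (f ⁻¹' {f x}) < δ * μ (f ⁻¹' N (f x))}
      = ∑ p ∈ bad, μ (f ⁻¹' {p}) := by rw [hbad, sum_measure_preimage_singleton _ fun q _ => hf q]
    _ ≤ ∑ p ∈ bad, δ * μ (f ⁻¹' N p) := Finset.sum_le_sum fun p hp => (Finset.mem_filter.1 hp).2.le
    _ ≤ δ * ∑ p, μ (f ⁻¹' N p) := by
        rw [← Finset.mul_sum]; gcongr; exact Finset.subset_univ _
    _ ≤ δ * M * μ univ := by
        rw [mul_assoc]; gcongr; exact sum_measure_preimage_le_mul_measure_univ μ hf N hN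

end Fibers

theorem ncard_setOf_forall_exists_add_le {ι G : Type*} [Fintype ι] [AddGroup G]
    (S : Finset G) (q : ι → G) :
    {p : ι → G | ∀ i, ∃ d ∈ S, q i = p i + d}.ncard ≤ S.card ^ Fintype.card ι := by
  classical
  have hsub : {p : ι → G | ∀ i, ∃ d ∈ S, q i = p i + d} ⊆
      ((Fintype.piFinset fun _ => S).image fun d i => q i - d i : Finset (ι → G)) := by
    intro p hp
    choose d hdS hd using hp
    simp only [Finset.coe_image, Fintype.coe_piFinset, mem_image, mem_pi, mem_univ, forall_const]
    exact ⟨d, hdS, funext fun i => by rw [hd i, add_sub_cancel_right]⟩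
  calc _ ≤ _ := Set.ncard_le_ncard hsub (Finset.finite_toSet _)
    _ ≤ (Fintype.piFinset fun _ : ι => S).card := by
        rw [Set.ncard_coe_finset]; exact Finset.card_image_le
    _ = _ := by simp

lemma circleRep_mem_Ico (x : AddCircle (2 * Real.pi)) :
    circleRep x ∈ Ico 0 (2 * Real.pi) := by
  have : Fact ((0 : ℝ) < 2 * Real.pi) := ⟨by positivity⟩
  have h : circleRep x ∈ Ico 0 (0 + 2 * Real.pi) := (AddCircle.equivIco (2 * Real.pi) 0 x).2
  rwa [zero_add] at h

lemma measurable_circleRep : Measurable circleRep := by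
  have : Fact ((0 : ℝ) < 2 * Real.pi) := ⟨by positivity⟩
  exact measurable_subtype_coe.comp (AddCircle.measurableEquivIco (2 * Real.pi) 0).measurable

lemma measurable_cubeIdx (k j : ℕ) : Measurable (cubeIdx k j) :=
  ((measurable_circleRep.mul_const _).div_const _).floor

lemma cubeIdx_nonneg (k j : ℕ) (x : AddCircle (2 * Real.pi)) : 0 ≤ cubeIdx k j x :=
  Int.floor_nonneg.2 <| div_nonneg (mul_nonneg (circleRep_mem_Ico x).1 (by positivity))
    (by positivity)

lemma cubeIdx_lt (k j : ℕ) [NeZero k] (x : AddCircle (2 * Real.pi)) :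
    cubeIdx k j x < (k : ℤ) ^ j := by
  have hk : (0 : ℝ) < (k : ℝ) ^ j := by have := NeZero.pos k; positivity
  refine Int.floor_lt.2 ?_
  rw [div_lt_iff₀ (by positivity)]
  push_cast
  nlinarith [(circleRep_mem_Ico x).2]

lemma intCast_cubeIdx_inj (k j : ℕ) [NeZero k] {x y : AddCircle (2 * Real.pi)} :
    (cubeIdx k j x : ZMod (k ^ j)) = cubeIdx k j y ↔ cubeIdx k j x = cubeIdx k j y := by
  have hmod (z) : cubeIdx k j z % ((k ^ j : ℕ) : ℤ) = cubeIdx k j z :=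
    Int.emod_eq_of_lt (cubeIdx_nonneg k j z) (by exact_mod_cast cubeIdx_lt k j z)
  rw [ZMod.intCast_eq_intCast_iff', hmod, hmod]

def cubeIndex (s k j : ℕ) (x : Torus s) : Fin s → ZMod (k ^ j) :=
  fun i => cubeIdx k j (x i)

lemma measurableSet_cubeIndex_preimage (s k j : ℕ) (p : Fin s → ZMod (k ^ j)) :
    MeasurableSet (cubeIndex s k j ⁻¹' {p}) := by
  have : cubeIndex s k j ⁻¹' {p} =
      ⋂ i, (fun y : Torus s => cubeIdx k j (y i)) ⁻¹' {a : ℤ | (a : ZMod (k ^ j)) = p i} := by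
    ext; simp [cubeIndex, funext_iff]
  rw [this]
  exact .iInter fun i =>
    (measurable_cubeIdx k j).comp (measurable_pi_apply i) MeasurableSet.of_discrete

lemma cubeAtom_eq_preimage (s k j : ℕ) [NeZero k] (x : Torus s) :
    cubeAtom s k j x = cubeIndex s k j ⁻¹' {cubeIndex s k j x} := by
  ext y
  simp [cubeAtom, cubeIndex, funext_iff, intCast_cubeIdx_inj]

lemma tildeCube_eq_preimage (s k j : ℕ) (x : Torus s) :
    tildeCube s k j x = cubeIndex s k j ⁻¹'
      {q | ∀ i, ∃ d : ℤ, |d| ≤ (3 * (k : ℤ) - 1) / 2 ∧ q i = cubeIndex s k j x i + d} :=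
  rfl

lemma ncard_tildeIndex_le (s k j : ℕ) (q : Fin s → ZMod (k ^ j)) :
    {p : Fin s → ZMod (k ^ j) |
      ∀ i, ∃ d : ℤ, |d| ≤ (3 * (k : ℤ) - 1) / 2 ∧ q i = p i + d}.ncard ≤ (3 * k) ^ s := by
  set D := (3 * (k : ℤ) - 1) / 2
  have hset : {p : Fin s → ZMod (k ^ j) | ∀ i, ∃ d : ℤ, |d| ≤ D ∧ q i = p i + d} =
      {p | ∀ i, ∃ d ∈ (Finset.Icc (-D) D).image ((↑) : ℤ → ZMod (k ^ j)), q i = p i + d} := by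
    ext p; simp [abs_le, and_assoc]
  have hcard : ((Finset.Icc (-D) D).image ((↑) : ℤ → ZMod (k ^ j))).card ≤ 3 * k :=
    Finset.card_image_le.trans <| by rw [Int.card_Icc]; omega
  rw [hset]
  exact (ncard_setOf_forall_exists_add_le _ q).trans <| by
    simpa using Nat.pow_le_pow_left hcard s

theorem measure_setOf_cubeAtom_lt_le {s : ℕ} (k j : ℕ) [NeZero k] (μ : Measure (Torus s))
    (δ : ℝ≥0∞) :
    μ {x | μ (cubeAtom s k j x) < δ * μ (tildeCube s k j x)} ≤ δ * 3 ^ s * k ^ s * μ univ := by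
  simp_rw [cubeAtom_eq_preimage, tildeCube_eq_preimage]
  calc _ ≤ δ * ((3 * k) ^ s : ℕ) * μ univ :=
        measure_setOf_measure_fiber_lt_le μ (measurableSet_cubeIndex_preimage s k j) _
          (ncard_tildeIndex_le s k j) δ
    _ = _ := by push_cast; ring

theorem mane_partition_lemma_tilde_general (s k j : ℕ) (hk : Odd k)
    (μ : Measure (Torus s)) [IsProbabilityMeasure μ] (δ : ENNReal) :
    1 - δ * 3 ^ s * (k : ENNReal) ^ s ≤
      μ {x : Torus s | δ * μ (tildeCube s k j x) ≤ μ (cubeAtom s k j x)} := by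
  have : NeZero k := ⟨hk.pos.ne'⟩
  have hbad := measure_setOf_cubeAtom_lt_le k j μ δ
  rw [measure_univ, mul_one] at hbad
  rw [tsub_le_iff_right]
  calc 1 = μ univ := measure_univ.symm
    _ ≤ _ := measure_univ_le_add_compl {x | δ * μ (tildeCube s k j x) ≤ μ (cubeAtom s k j x)}
    _ ≤ _ := by gcongr; simpa only [compl_ofPred, not_le] using hbad

theorem mane_partition_lemma_tilde (s k j : ℕ) (hk : Odd k) (hj : 1 ≤ j)
    (μ : Measure (Torus s)) [IsProbabilityMeasure μ] (δ : ENNReal) (hδ : 0 < δ) :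
    1 - δ * 3 ^ s * (k : ENNReal) ^ s ≤
      μ {x : Torus s | δ * μ (tildeCube s k j x) ≤ μ (cubeAtom s k j x)} :=
  mane_partition_lemma_tilde_general s k j hk μ δ
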